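/- arXiv:1710.11388 — 2 statements merged into one kernel-verified Lean document; each statement's English description precedes it below -/
import Mathlib

section
/- Let M be a model category with weak equivalences W and fibrations F, let U : N → M be a right adjoint functor from a category N, and suppose: (i) every object X of N admits a morphism ψ_X : X → RX with U(ψ_X) a weak equivalence and U(RX) fibrant; (ii) for every morphism α : X → Y in N there is Rα : RX → RY with Rα ∘ ψ_X = ψ_Y ∘ α; (iii) for every X, the diagonal RX → RX × RX factors as RX →(w) Path(RX) →(p) RX × RX with U(w) ∈ W and U(p) ∈ F. Then every morphism of N with the left lifting property against all morphisms in U⁻¹F lies in U⁻¹W (the Path Object Argument). -/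
open CategoryTheory Limits

universe v₁ v₂ u₁ u₂

section ModelPrelude

variable {M : Type u₁} [Category.{v₁} M]

/-- The class of morphisms with the left lifting property against all morphisms in `R`. -/
def llp (R : MorphismProperty M) : MorphismProperty M :=
  fun _ _ f => ∀ ⦃X Y : M⦄ (g : X ⟶ Y), R g → HasLiftingProperty f g

/-- The class of morphisms with the right lifting property against all morphisms in `L`. -/
def rlp (L : MorphismProperty M) : MorphismProperty M :=
  fun _ _ f => ∀ ⦃X Y : M⦄ (g : X ⟶ Y), L g → HasLiftingProperty g f

/-- `(L, R)` is a weak factorization system. -/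
structure IsWFS (L R : MorphismProperty M) : Prop where
  left_eq : L = llp R
  right_eq : R = rlp L
  factor : ∀ ⦃X Y : M⦄ (f : X ⟶ Y), ∃ (Z : M) (g : X ⟶ Z) (h : Z ⟶ Y),
    L g ∧ R h ∧ g ≫ h = f

/-- `(C, F, W)` is a model structure. -/
structure IsModelStructure (C F W : MorphismProperty M) : Prop where
  comp_mem : ∀ ⦃X Y Z : M⦄ (f : X ⟶ Y) (g : Y ⟶ Z), W f → W g → W (f ≫ g)
  of_comp_left : ∀ ⦃X Y Z : M⦄ (f : X ⟶ Y) (g : Y ⟶ Z), W f → W (f ≫ g) → W g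
  of_comp_right : ∀ ⦃X Y Z : M⦄ (f : X ⟶ Y) (g : Y ⟶ Z), W g → W (f ≫ g) → W f
  wfs_trivCof_fib : IsWFS (C ⊓ W) F
  wfs_cof_trivFib : IsWFS C (F ⊓ W)

end ModelPrelude

section TwoOutOfSix

variable {M : Type u₁} [Category.{v₁} M] {C F W : MorphismProperty M}

lemma hasLift_C_FW (hM : IsModelStructure C F W) {A B X Y : M} {c : A ⟶ B} (hc : C c)
    {g : X ⟶ Y} (hgF : F g) (hgW : W g) : HasLiftingProperty c g := by
  have hc' : llp (F ⊓ W) c := by rw [← hM.wfs_cof_trivFib.left_eq]; exact hc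
  exact hc' g ⟨hgF, hgW⟩

lemma hasLift_CW_F (hM : IsModelStructure C F W) {A B X Y : M} {c : A ⟶ B}
    (hcC : C c) (hcW : W c) {g : X ⟶ Y} (hg : F g) : HasLiftingProperty c g := by
  have hc' : llp F c := by
    rw [← hM.wfs_trivCof_fib.left_eq]; exact ⟨hcC, hcW⟩
  exact hc' g hg

lemma W_id (hM : IsModelStructure C F W) (Z : M) : W (𝟙 Z) := by
  have h : (C ⊓ W) (𝟙 Z) := by
    rw [hM.wfs_trivCof_fib.left_eq]
    intro X Y g _
    infer_instance
  exact h.2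

lemma F_comp (hM : IsModelStructure C F W) {X Y Z : M} {g : X ⟶ Y} {h : Y ⟶ Z}
    (hg : F g) (hh : F h) : F (g ≫ h) := by
  rw [hM.wfs_trivCof_fib.right_eq] at hg hh ⊢
  intro A B c hc
  haveI := hg c hc
  haveI := hh c hc
  infer_instance

lemma F_comp_isIso (hM : IsModelStructure C F W) {X Y Z : M} {g : X ⟶ Y} (h : Y ⟶ Z)
    [IsIso h] (hg : F g) : F (g ≫ h) := by
  rw [hM.wfs_trivCof_fib.right_eq] at hg ⊢
  intro A B c hc
  haveI := hg c hc
  infer_instance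

/-- The key step: if `x ≫ y` is a trivial fibration, `y` is a fibration and
`W (y ≫ z)`, then `W y`.  This is the core of the two-out-of-six property. -/
lemma W_core (hM : IsModelStructure C F W) {P Q R S : M} (x : P ⟶ Q) (y : Q ⟶ R) (z : R ⟶ S)
    (hxyF : F (x ≫ y)) (hxyW : W (x ≫ y)) (hyF : F y) (hyzW : W (y ≫ z)) : W y := by
  -- factor x = ix ≫ px with ix a cofibration and px a trivial fibration
  obtain ⟨V, ix, px, hix, hpx, hxfac⟩ := hM.wfs_cof_trivFib.factor x
  -- a retraction r of ix, lifting against the trivial fibration x ≫ y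
  haveI : HasLiftingProperty ix (x ≫ y) := hasLift_C_FW hM hix hxyF hxyW
  have sqr : CommSq (𝟙 P) ix (x ≫ y) (px ≫ y) :=
    ⟨by rw [Category.id_comp, ← Category.assoc, hxfac]⟩
  set r : V ⟶ P := sqr.lift with hr
  have hr1 : ix ≫ r = 𝟙 P := sqr.fac_left
  have hr2 : r ≫ (x ≫ y) = px ≫ y := sqr.fac_right
  -- the endomorphism e := r ≫ ix of V
  set e : V ⟶ V := r ≫ ix with he
  have heY : e ≫ (px ≫ y) = px ≫ y := by
    rw [he, Category.assoc, ← Category.assoc ix px y, hxfac, hr2]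
  have heW : W e := by
    have hw0 : W (px ≫ (y ≫ z)) := hM.comp_mem px (y ≫ z) hpx.2 hyzW
    have h1 : e ≫ (px ≫ (y ≫ z)) = px ≫ (y ≫ z) := by
      have := heY
      calc e ≫ (px ≫ (y ≫ z)) = (e ≫ (px ≫ y)) ≫ z := by simp [Category.assoc]
        _ = (px ≫ y) ≫ z := by rw [heY]
        _ = px ≫ (y ≫ z) := by simp [Category.assoc]
    exact hM.of_comp_right e (px ≫ (y ≫ z)) hw0 (by rw [h1]; exact hw0)
  -- factor e = ie ≫ pe, trivial cofibration followed by fibration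
  obtain ⟨V', ie, pe, hie, hpe, hefac⟩ := hM.wfs_trivCof_fib.factor e
  have hpeW : W pe := hM.of_comp_left ie pe hie.2 (by rw [hefac]; exact heW)
  -- a retraction ρ of ie compatible with px ≫ y
  haveI : HasLiftingProperty ie (px ≫ y) :=
    hasLift_CW_F hM hie.1 hie.2 (F_comp hM hpx.1 hyF)
  have sqρ : CommSq (𝟙 V) ie (px ≫ y) (pe ≫ (px ≫ y)) :=
    ⟨by rw [Category.id_comp, ← Category.assoc, hefac, heY]⟩
  set ρ : V' ⟶ V := sqρ.lift with hρ
  have hρ1 : ie ≫ ρ = 𝟙 V := sqρ.fac_left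
  have hρ2 : ρ ≫ (px ≫ y) = pe ≫ (px ≫ y) := sqρ.fac_right
  -- now show that px ≫ y is a trivial fibration by verifying the rlp against C
  have hkey : (F ⊓ W) (px ≫ y) := by
    rw [hM.wfs_cof_trivFib.right_eq]
    intro A B c₀ hc₀
    constructor
    intro h k sq
    -- lift against the trivial fibration x ≫ y
    haveI : HasLiftingProperty c₀ (x ≫ y) := hasLift_C_FW hM hc₀ hxyF hxyW
    have sq1 : CommSq (h ≫ r) c₀ (x ≫ y) k :=
      ⟨by rw [Category.assoc, hr2]; exact sq.w⟩
    -- lift against the trivial fibration pe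
    have hpeF : (F ⊓ W) pe := ⟨hpe, hpeW⟩
    rw [hM.wfs_cof_trivFib.right_eq] at hpeF
    haveI : HasLiftingProperty c₀ pe := hpeF c₀ hc₀
    have sq2 : CommSq (h ≫ ie) c₀ pe (sq1.lift ≫ ix) :=
      ⟨by rw [Category.assoc, hefac, he, ← Category.assoc h r ix,
          ← Category.assoc c₀ sq1.lift ix, sq1.fac_left]⟩
    exact CommSq.HasLift.mk'
      { l := sq2.lift ≫ ρ
        fac_left := by
          rw [← Category.assoc, sq2.fac_left, Category.assoc, hρ1, Category.comp_id]
        fac_right := by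
          rw [Category.assoc, hρ2, ← Category.assoc, sq2.fac_right,
            Category.assoc, ← Category.assoc ix px y, hxfac, sq1.fac_right] }
  exact hM.of_comp_left px y hpx.2 hkey.2

/-- Half of the two-out-of-six property: if `W (a ≫ b)` and `W (b ≫ c)` then `W a`. -/
lemma W_two_of_six (hM : IsModelStructure C F W) {A B C' D : M} (a : A ⟶ B) (b : B ⟶ C')
    (c : C' ⟶ D) (hab : W (a ≫ b)) (hbc : W (b ≫ c)) : W a := by
  -- factor b as a trivial cofibration j followed by a fibration q
  obtain ⟨V₂, j, q, hj, hq, hjq⟩ := hM.wfs_trivCof_fib.factor b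
  have hqc : W (q ≫ c) := by
    refine hM.of_comp_left j (q ≫ c) hj.2 ?_
    rw [← Category.assoc, hjq]; exact hbc
  -- factor a ≫ j as a trivial cofibration i₁ followed by a fibration p₁
  obtain ⟨V₁, i₁, p₁, hi₁, hp₁, hip⟩ := hM.wfs_trivCof_fib.factor (a ≫ j)
  have hpq : W (p₁ ≫ q) := by
    refine hM.of_comp_left i₁ (p₁ ≫ q) hi₁.2 ?_
    rw [← Category.assoc, hip, Category.assoc, hjq]; exact hab
  have hqW : W q := W_core hM p₁ q c (F_comp hM hp₁ hq) hpq hq hqc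
  have hbW : W b := by rw [← hjq]; exact hM.comp_mem j q hj.2 hqW
  exact hM.of_comp_right a b hbW hab

end TwoOutOfSix



/-- **Path Object Argument.** Let `M` be a model category with weak
equivalences `W` and fibrations `F`, and let `U : N ⥤ M` be a right adjoint functor
(`L' ⊣ U`). Suppose:
(i) every object `X` of `N` admits `ψ X : X ⟶ R X` with `U (ψ X)` a weak equivalence
and `U (R X)` fibrant;
(ii) every `α : X ⟶ Y` admits `Rα : R X ⟶ R Y` with `Rα ∘ ψ X = ψ Y ∘ α`;
(iii) for every `X`, the diagonal `R X ⟶ R X × R X` factors as a map whose image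
under `U` is a weak equivalence followed by one whose image is a fibration.
Then every morphism of `N` with the left lifting property against all morphisms of
`U⁻¹F` lies in `U⁻¹W`. -/
theorem statement10 {M : Type u₁} [Category.{v₁} M] {N : Type u₂} [Category.{v₂} N]
    [HasTerminal M] [HasTerminal N] [HasBinaryProducts N]
    (C F W : MorphismProperty M) (hM : IsModelStructure C F W)
    (L' : M ⥤ N) (U : N ⥤ M) (adj : L' ⊣ U)
    (R : N → N) (ψ : ∀ X : N, X ⟶ R X)
    (h₁ : ∀ X : N, W (U.map (ψ X)) ∧ F (terminal.from (U.obj (R X))))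
    (h₂ : ∀ ⦃X Y : N⦄ (α : X ⟶ Y), ∃ Rα : R X ⟶ R Y, ψ X ≫ Rα = α ≫ ψ Y)
    (h₃ : ∀ X : N, ∃ (P : N) (w : R X ⟶ P) (p : P ⟶ prod (R X) (R X)),
      w ≫ p = prod.lift (𝟙 (R X)) (𝟙 (R X)) ∧ W (U.map w) ∧ F (U.map p)) :
    llp (F.inverseImage U) ≤ W.inverseImage U := by
  intro X Y f hf
  show W (U.map f)
  -- U preserves the terminal object
  haveI : Limits.PreservesLimitsOfSize.{0, 0} U := adj.rightAdjoint_preservesLimits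
  -- Step 1: the map U.map (terminal.from (R X)) is a fibration
  have hFt : F (U.map (terminal.from (R X))) := by
    have e : U.obj (⊤_ N) ≅ ⊤_ M := PreservesTerminal.iso U
    have key : U.map (terminal.from (R X)) = terminal.from (U.obj (R X)) ≫ e.inv := by
      rw [Iso.eq_comp_inv]
      apply terminal.hom_ext
    rw [key]
    exact F_comp_isIso hM e.inv (h₁ X).2
  -- Step 2: a retraction-up-to-ψ : s : Y ⟶ R X with f ≫ s = ψ X
  haveI := hf (terminal.from (R X)) hFt
  have sq1 : CommSq (ψ X) f (terminal.from (R X)) (terminal.from Y) :=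
    ⟨terminal.hom_ext _ _⟩
  set s : Y ⟶ R X := sq1.lift with hs_def
  have hs : f ≫ s = ψ X := sq1.fac_left
  -- Step 3: naturality map Rf
  obtain ⟨Rf, hRf⟩ := h₂ f
  -- Step 4: the path object of R Y, and the homotopy H
  obtain ⟨P, w, p, hwp, hUw, hUp⟩ := h₃ Y
  haveI := hf p hUp
  have hcyl1 : w ≫ p ≫ prod.fst = 𝟙 (R Y) := by
    rw [← Category.assoc, hwp, prod.lift_fst]
  have hcyl2 : w ≫ p ≫ prod.snd = 𝟙 (R Y) := by
    rw [← Category.assoc, hwp, prod.lift_snd]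
  have sq2 : CommSq (f ≫ ψ Y ≫ w) f p (prod.lift (s ≫ Rf) (ψ Y)) := by
    constructor
    apply Limits.prod.hom_ext
    · simp only [Category.assoc, prod.lift_fst]
      rw [hcyl1, Category.comp_id, ← Category.assoc f s Rf, hs, hRf]
    · simp only [Category.assoc, prod.lift_snd]
      rw [hcyl2, Category.comp_id]
  set H : Y ⟶ P := sq2.lift with hH_def
  have hH1 : f ≫ H = f ≫ ψ Y ≫ w := sq2.fac_left
  have hH2 : H ≫ p = prod.lift (s ≫ Rf) (ψ Y) := sq2.fac_right
  -- Step 5: the two projections of the path object are weak equivalences under U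
  have hπ : ∀ (pr : prod (R Y) (R Y) ⟶ R Y), prod.lift (𝟙 (R Y)) (𝟙 (R Y)) ≫ pr = 𝟙 (R Y) →
      W (U.map (p ≫ pr)) := by
    intro pr hpr
    refine hM.of_comp_left (U.map w) (U.map (p ≫ pr)) hUw ?_
    rw [← U.map_comp, ← Category.assoc, hwp, hpr, U.map_id]
    exact W_id hM _
  have hπ₁ : W (U.map (p ≫ prod.fst)) := hπ prod.fst (prod.lift_fst _ _)
  have hπ₂ : W (U.map (p ≫ prod.snd)) := hπ prod.snd (prod.lift_snd _ _)
  -- Step 6: U.map H is a weak equivalence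
  have hHsnd : H ≫ p ≫ prod.snd = ψ Y := by
    rw [← Category.assoc, hH2, prod.lift_snd]
  have hHW : W (U.map H) := by
    refine hM.of_comp_right (U.map H) (U.map (p ≫ prod.snd)) hπ₂ ?_
    rw [← U.map_comp, hHsnd]
    exact (h₁ Y).1
  -- Step 7: U.map (s ≫ Rf) is a weak equivalence
  have hHfst : H ≫ p ≫ prod.fst = s ≫ Rf := by
    rw [← Category.assoc, hH2, prod.lift_fst]
  have hsRf : W (U.map s ≫ U.map Rf) := by
    rw [← U.map_comp, ← hHfst, U.map_comp]
    exact hM.comp_mem _ _ hHW hπ₁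
  -- Step 8: two-out-of-six
  have hfs : W (U.map f ≫ U.map s) := by
    rw [← U.map_comp, hs]
    exact (h₁ X).1
  exact W_two_of_six hM (U.map f) (U.map s) (U.map Rf) hfs hsRf
end

section
/- Let M be a model category with weak equivalences W and cofibrations C, let V : K → M be a left-adjoint-admitting functor from a category K with finite coproducts, and suppose: (i) every object X of K admits a morphism φ_X : QX → X with V(φ_X) a weak equivalence and V(QX) cofibrant; (ii) for every morphism α : X → Y in K there is Qα : QX → QY with α ∘ φ_X = φ_Y ∘ Qα; (iii) for every X, the fold map QX ⊔ QX → QX factors as QX ⊔ QX →(i) Cyl(QX) →(w) QX with V(i) ∈ C and V(w) ∈ W. Then every morphism of K with the right lifting property against all morphisms in V⁻¹C lies in V⁻¹W (the Cylinder Object Argument). -/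
open CategoryTheory Limits

universe v₁ v₂ u₁ u₂

section TwoOfSix

variable {M : Type u₁} [Category.{v₁} M]

/-- Composition stability for a right lifting class. -/
lemma rlp_comp {L : MorphismProperty M} {X Y Z : M} {f : X ⟶ Y} {g : Y ⟶ Z}
    (hf : rlp L f) (hg : rlp L g) : rlp L (f ≫ g) := by
  intro U U' γ hγ
  haveI := hf γ hγ
  haveI := hg γ hγ
  infer_instance

/-- Lifting from the two classes of a weak factorization system. -/
lemma IsWFS.hasLift {L R : MorphismProperty M} (h : IsWFS L R)
    {A B X Y : M} {g : A ⟶ B} {p : X ⟶ Y} (hg : L g) (hp : R p) :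
    HasLiftingProperty g p := by
  rw [h.left_eq] at hg
  exact hg p hp

/-- **Two-out-of-six (rightmost map)** for a model structure, proved without any
(co)limit hypotheses, using only the two weak factorization systems and 2-out-of-3. -/
lemma IsModelStructure.two_of_six_right {C F W : MorphismProperty M}
    (hM : IsModelStructure C F W) {A B E D : M} (a : A ⟶ B) (b : B ⟶ E) (c : E ⟶ D)
    (hab : W (a ≫ b)) (hbc : W (b ≫ c)) : W c := by
  -- Step 1 : factor `c = j₁ ≫ q₁` with `j₁` a trivial cofibration and `q₁` a fibration.
  obtain ⟨Z₁, j₁, q₁, hj₁, hq₁, hfac₁⟩ := hM.wfs_trivCof_fib.factor c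
  -- Step 2 : factor `b ≫ j₁ = j₂ ≫ q₂` likewise.
  obtain ⟨Z₂, j₂, q₂, hj₂, hq₂, hfac₂⟩ := hM.wfs_trivCof_fib.factor (b ≫ j₁)
  have hab₂ : W (a ≫ j₂ ≫ q₂) := by
    rw [hfac₂, ← Category.assoc]
    exact hM.comp_mem _ _ hab hj₁.2
  have hb₃ : W (q₂ ≫ q₁) := by
    refine hM.of_comp_left j₂ (q₂ ≫ q₁) hj₂.2 ?_
    rw [← Category.assoc, hfac₂, Category.assoc, hfac₁]
    exact hbc
  -- Step 3 : factor `a ≫ j₂ = k ≫ m` with `k` a cofibration, `m` a trivial fibration.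
  obtain ⟨A₄, k, m, hk, hm, hfac₃⟩ := hM.wfs_cof_trivFib.factor (a ≫ j₂)
  -- `b₄ := m ≫ q₂`
  have hu₄ : W (k ≫ m ≫ q₂) := by
    rw [← Category.assoc, hfac₃, Category.assoc]
    exact hab₂
  have hv₄W : W (m ≫ q₂ ≫ q₁) := hM.comp_mem _ _ hm.2 hb₃
  -- Step 4 : factor `k ≫ m ≫ q₂ = i₅ ≫ p₅` with `i₅` trivial cofibration, `p₅` fibration.
  obtain ⟨G, i₅, p₅, hi₅, hp₅, hfac₅⟩ := hM.wfs_trivCof_fib.factor (k ≫ m ≫ q₂)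
  have hp₅W : W p₅ := hM.of_comp_left i₅ p₅ hi₅.2 (by rw [hfac₅]; exact hu₄)
  -- lift `d` in the square `(i₅, k, p₅, m ≫ q₂)`.
  haveI : HasLiftingProperty k p₅ := hM.wfs_cof_trivFib.hasLift hk ⟨hp₅, hp₅W⟩
  have sqd : CommSq i₅ k p₅ (m ≫ q₂) := ⟨hfac₅⟩
  set d : A₄ ⟶ G := sqd.lift with hd
  have hdl : k ≫ d = i₅ := sqd.fac_left
  have hdr : d ≫ p₅ = m ≫ q₂ := sqd.fac_right
  -- Step 5 : factor `d = j₆ ≫ q₆` with `j₆` trivial cofibration, `q₆` fibration.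
  obtain ⟨H, j₆, q₆, hj₆, hq₆, hfac₆⟩ := hM.wfs_trivCof_fib.factor d
  -- the section `t` of `q₆`.
  haveI : HasLiftingProperty i₅ q₆ := hM.wfs_trivCof_fib.hasLift hi₅ hq₆
  have sqt : CommSq (k ≫ j₆) i₅ q₆ (𝟙 G) := ⟨by
    rw [Category.assoc, hfac₆, hdl, Category.comp_id]⟩
  set t : G ⟶ H := sqt.lift with ht
  have htr : t ≫ q₆ = 𝟙 G := sqt.fac_right
  -- `y := p₅ ≫ q₁` and `v := q₆ ≫ y`.
  have hvW : W (q₆ ≫ p₅ ≫ q₁) := by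
    refine hM.of_comp_left j₆ (q₆ ≫ p₅ ≫ q₁) hj₆.2 ?_
    have e1 : j₆ ≫ q₆ ≫ p₅ ≫ q₁ = ((j₆ ≫ q₆) ≫ p₅) ≫ q₁ := by
      simp only [Category.assoc]
    rw [e1, hfac₆, hdr, Category.assoc]
    exact hv₄W
  have hvF : F (q₆ ≫ p₅ ≫ q₁) := by
    rw [hM.wfs_trivCof_fib.right_eq] at hq₆ hp₅ hq₁ ⊢
    exact rlp_comp hq₆ (rlp_comp hp₅ hq₁)
  have hvrlp : rlp C (q₆ ≫ p₅ ≫ q₁) := by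
    rw [← hM.wfs_cof_trivFib.right_eq]
    exact ⟨hvF, hvW⟩
  -- `y := p₅ ≫ q₁` has the right lifting property against all cofibrations.
  have hyrlp : rlp C (p₅ ≫ q₁) := by
    intro P P' γ hγ
    haveI : HasLiftingProperty γ (q₆ ≫ p₅ ≫ q₁) := hvrlp γ hγ
    constructor
    intro τ δ sq
    have sq' : CommSq (τ ≫ t) γ (q₆ ≫ p₅ ≫ q₁) δ := ⟨by
      rw [Category.assoc, ← Category.assoc t, htr, Category.id_comp, sq.w]⟩
    exact ⟨⟨{ l := sq'.lift ≫ q₆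
              fac_left := by rw [← Category.assoc, sq'.fac_left, Category.assoc, htr,
                Category.comp_id]
              fac_right := by rw [Category.assoc, sq'.fac_right] }⟩⟩
  have hyW : W (p₅ ≫ q₁) := by
    have : (F ⊓ W) (p₅ ≫ q₁) := by rw [hM.wfs_cof_trivFib.right_eq]; exact hyrlp
    exact this.2
  -- conclude step by step
  have hq₆W : W q₆ := hM.of_comp_right q₆ (p₅ ≫ q₁) hyW hvW
  have hdW : W d := by rw [← hfac₆]; exact hM.comp_mem _ _ hj₆.2 hq₆W
  have hb₄W : W (m ≫ q₂) := by rw [← hdr]; exact hM.comp_mem _ _ hdW hp₅W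
  have hq₂W : W q₂ := hM.of_comp_left m q₂ hm.2 hb₄W
  have hb₂W : W (b ≫ j₁) := by rw [← hfac₂]; exact hM.comp_mem _ _ hj₂.2 hq₂W
  have hbW : W b := hM.of_comp_right b j₁ hj₁.2 hb₂W
  exact hM.of_comp_left b c hbW hbc

end TwoOfSix


/-- **Cylinder Object Argument.** Let `M` be a model category with weak
equivalences `W` and cofibrations `C`, and let `V : K ⥤ M` be a functor admitting a
right adjoint (`V ⊣ R'`), where `K` has finite coproducts. Suppose:
(i) every object `X` of `K` admits `φ X : Q X ⟶ X` with `V (φ X)` a weak equivalence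
and `V (Q X)` cofibrant;
(ii) every `α : X ⟶ Y` admits `Qα : Q X ⟶ Q Y` with `α ∘ φ X = φ Y ∘ Qα`;
(iii) for every `X`, the fold map `Q X ⊔ Q X ⟶ Q X` factors as a map whose image
under `V` is a cofibration followed by one whose image is a weak equivalence.
Then every morphism of `K` with the right lifting property against all morphisms of
`V⁻¹C` lies in `V⁻¹W`. -/
theorem statement11 {M : Type u₁} [Category.{v₁} M] {K : Type u₂} [Category.{v₂} K]
    [HasInitial M] [HasInitial K] [HasBinaryCoproducts K]
    (C F W : MorphismProperty M) (hM : IsModelStructure C F W)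
    (V : K ⥤ M) (R' : M ⥤ K) (adj : V ⊣ R')
    (Q : K → K) (φ : ∀ X : K, Q X ⟶ X)
    (h₁ : ∀ X : K, W (V.map (φ X)) ∧ C (initial.to (V.obj (Q X))))
    (h₂ : ∀ ⦃X Y : K⦄ (α : X ⟶ Y), ∃ Qα : Q X ⟶ Q Y, Qα ≫ φ Y = φ X ≫ α)
    (h₃ : ∀ X : K, ∃ (Cyl : K) (i : coprod (Q X) (Q X) ⟶ Cyl) (w : Cyl ⟶ Q X),
      i ≫ w = coprod.desc (𝟙 (Q X)) (𝟙 (Q X)) ∧ C (V.map i) ∧ W (V.map w)) :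
    rlp (C.inverseImage V) ≤ W.inverseImage V := by
  intro X' Y' f hf
  obtain ⟨hφX, -⟩ := h₁ X'
  obtain ⟨hφY, hCY⟩ := h₁ Y'
  -- `V` preserves the initial object since it is a left adjoint.
  haveI : PreservesColimitsOfSize.{0, 0} V := adj.leftAdjoint_preservesColimits
  have isInitV : IsInitial (V.obj (⊥_ K)) := initialIsInitial.isInitialObj V (⊥_ K)
  -- `initial.to (Q Y')` lies in `V⁻¹ C`.
  have hCinit : (C.inverseImage V) (initial.to (Q Y')) := by
    show C (V.map (initial.to (Q Y')))
    have heq : V.map (initial.to (Q Y')) =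
        (isInitV.uniqueUpToIso initialIsInitial).hom ≫ initial.to (V.obj (Q Y')) :=
      isInitV.hom_ext _ _
    rw [hM.wfs_cof_trivFib.left_eq]
    intro U U' p hp
    have hCY' := hCY
    rw [hM.wfs_cof_trivFib.left_eq] at hCY'
    haveI : HasLiftingProperty (initial.to (V.obj (Q Y'))) p := hCY' p hp
    rw [heq]
    infer_instance
  -- the lift `s : Q Y' ⟶ X'` with `s ≫ f = φ Y'`.
  haveI hl₁ : HasLiftingProperty (initial.to (Q Y')) f := hf _ hCinit
  have sq1 : CommSq (initial.to X') (initial.to (Q Y')) f (φ Y') :=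
    ⟨initial.hom_ext _ _⟩
  set s : Q Y' ⟶ X' := sq1.lift with hsdef
  have hs : s ≫ f = φ Y' := sq1.fac_right
  obtain ⟨Qf, hQf⟩ := h₂ f
  obtain ⟨Cyl, i, wc, hiw, hCi, hWw⟩ := h₃ X'
  haveI hl₂ : HasLiftingProperty i f := hf _ (show (C.inverseImage V) i from hCi)
  have hiw₀ : coprod.inl ≫ i ≫ wc = 𝟙 (Q X') := by rw [hiw, coprod.inl_desc]
  have hiw₁ : coprod.inr ≫ i ≫ wc = 𝟙 (Q X') := by rw [hiw, coprod.inr_desc]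
  have hQsf : (Qf ≫ s) ≫ f = φ X' ≫ f := by rw [Category.assoc, hs, hQf]
  have hw2 : coprod.desc (φ X') (Qf ≫ s) ≫ f = i ≫ wc ≫ φ X' ≫ f := by
    rw [coprod.desc_comp, hQsf, ← Category.assoc, hiw, coprod.desc_comp, Category.id_comp]
  have sq2 : CommSq (coprod.desc (φ X') (Qf ≫ s)) i f (wc ≫ φ X' ≫ f) := ⟨hw2⟩
  set h : Cyl ⟶ X' := sq2.lift with hhdef
  have hfl : i ≫ h = coprod.desc (φ X') (Qf ≫ s) := sq2.fac_left
  have hend₀ : (coprod.inl ≫ i) ≫ h = φ X' := by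
    rw [Category.assoc, hfl, coprod.inl_desc]
  have hend₁ : (coprod.inr ≫ i) ≫ h = Qf ≫ s := by
    rw [Category.assoc, hfl, coprod.inr_desc]
  -- weak equivalence bookkeeping in `M`.
  have hidW : W (𝟙 (V.obj (Q X'))) :=
    hM.of_comp_right (𝟙 _) (V.map (φ X')) hφX (by rw [Category.id_comp]; exact hφX)
  have hℓ₀ : W (V.map (coprod.inl ≫ i)) :=
    hM.of_comp_right (V.map (coprod.inl ≫ i)) (V.map wc) hWw (by
      rw [← V.map_comp, show (coprod.inl ≫ i) ≫ wc = 𝟙 (Q X') from by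
        rw [Category.assoc]; exact hiw₀, V.map_id]
      exact hidW)
  have hℓ₁ : W (V.map (coprod.inr ≫ i)) :=
    hM.of_comp_right (V.map (coprod.inr ≫ i)) (V.map wc) hWw (by
      rw [← V.map_comp, show (coprod.inr ≫ i) ≫ wc = 𝟙 (Q X') from by
        rw [Category.assoc]; exact hiw₁, V.map_id]
      exact hidW)
  have hhW : W (V.map h) :=
    hM.of_comp_left (V.map (coprod.inl ≫ i)) (V.map h) hℓ₀ (by
      rw [← V.map_comp, hend₀]; exact hφX)
  have hQfs : W (V.map Qf ≫ V.map s) := by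
    rw [← V.map_comp, ← hend₁, V.map_comp]
    exact hM.comp_mem _ _ hℓ₁ hhW
  have hsf : W (V.map s ≫ V.map f) := by rw [← V.map_comp, hs]; exact hφY
  show W (V.map f)
  exact hM.two_of_six_right (V.map Qf) (V.map s) (V.map f) hQfs hsf
end
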